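/- arXiv:1511.03529 — 8 statements merged into one kernel-verified Lean document; each statement's English description precedes it below -/
import Mathlib

section
/- Let m ≥ 3 be odd with s = max{v₂(m+1), v₂(m−1)}, and write T_m(x) = Σ_{i=0}^{(m−1)/2} c_{2i+1} x^{2i+1}. Then for every i with 1 < i ≤ (m−1)/2, the coefficient c_{2i+1} satisfies v₂(c_{2i+1}) ≥ s+1. -/
open Polynomial Polynomial.Chebyshev
open scoped Nat

/-! Comparing coefficients in Chebyshev's equation `(1 - x²) T'' - x T' + m² T = 0` gives
`(2i+1)! c_{2i+1} = c_1 ∏_{j<i} ((2j+1)² - m²)` with `c_1 = T'(0) = ±m`. The factor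
`1 - m² = -(m+1)(m-1)` is divisible by `2^(s+1)`, each of the other `i - 1` factors is a difference
of odd squares and hence divisible by `8`, while `v₂((2i+1)!) < 2i`. Therefore
`v₂(c_{2i+1}) ≥ s + 1 + 3(i-1) - (2i-1) = s + i - 1 ≥ s + 1`. -/

theorem Polynomial.factorial_mul_coeff_eq_iterate_derivative_eval_zero {R : Type*} [Semiring R]
    (p : R[X]) (k : ℕ) : (k ! : R) * p.coeff k = (derivative^[k] p).eval 0 := by
  rw [← coeff_zero_eq_eval_zero, coeff_iterate_derivative, zero_add, Nat.descFactorial_self,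
    nsmul_eq_mul]

namespace Polynomial.Chebyshev

variable {R : Type*} [CommRing R]

theorem derivative_T_eval_zero_of_odd {n : ℤ} (hn : Odd n) :
    (derivative (T R n)).eval 0 = n * ((n - 1) / 2).negOnePow := by
  rw [T_derivative_eq_U, eval_mul, eval_intCast,
    U_eval_zero_of_even (R := R) (n := n - 1) (by simpa using hn.sub_odd odd_one)]

theorem iterate_derivative_T_eval_zero_two_mul_add_one (n : ℤ) (i : ℕ) :
    (derivative^[2 * i + 1] (T R n)).eval 0 =
      (derivative (T R n)).eval 0 * ∏ j ∈ Finset.range i, ((2 * j + 1) ^ 2 - n ^ 2 : R) := by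
  induction i with
  | zero => simp
  | succ i ih =>
    rw [show 2 * (i + 1) + 1 = 2 * i + 1 + 2 by ring, iterate_derivative_T_eval_zero_recurrence,
      ih, Finset.prod_range_succ]
    push_cast
    ring

theorem factorial_mul_coeff_T_two_mul_add_one (n : ℤ) (i : ℕ) :
    ((2 * i + 1) ! : R) * (T R n).coeff (2 * i + 1) =
      (derivative (T R n)).eval 0 * ∏ j ∈ Finset.range i, ((2 * j + 1) ^ 2 - n ^ 2 : R) := by
  rw [factorial_mul_coeff_eq_iterate_derivative_eval_zero,
    iterate_derivative_T_eval_zero_two_mul_add_one]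

end Polynomial.Chebyshev

theorem two_pow_max_padicValNat_succ_dvd_sq_sub_one {m : ℕ} (hm : Odd m) :
    (2 : ℤ) ^ (max (padicValNat 2 (m + 1)) (padicValNat 2 (m - 1)) + 1) ∣ (m : ℤ) ^ 2 - 1 := by
  obtain ⟨k, rfl⟩ := hm
  have hplus : (2 : ℤ) ^ padicValNat 2 (2 * k + 1 + 1) ∣ 2 * k + 2 := by
    exact_mod_cast pow_padicValNat_dvd (p := 2) (n := 2 * k + 1 + 1)
  have hminus : (2 : ℤ) ^ padicValNat 2 (2 * k + 1 - 1) ∣ 2 * k := by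
    exact_mod_cast pow_padicValNat_dvd (p := 2) (n := 2 * k + 1 - 1)
  have hfactor : ((2 * k + 1 : ℕ) : ℤ) ^ 2 - 1 = (2 * k + 2) * (2 * k) := by push_cast; ring
  rw [hfactor, pow_succ]
  rcases le_total (padicValNat 2 (2 * k + 1 - 1)) (padicValNat 2 (2 * k + 1 + 1)) with h | h
  · rw [max_eq_left h]
    exact mul_dvd_mul hplus (dvd_mul_right 2 _)
  · rw [max_eq_right h, mul_comm (2 * (k : ℤ) + 2)]
    exact mul_dvd_mul hminus ⟨k + 1, by ring⟩

theorem sq_sub_one_mul_eight_pow_dvd_prod_odd_sq_sub_sq {n : ℤ} (hn : Odd n) (i : ℕ) :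
    (n ^ 2 - 1) * 8 ^ i ∣ ∏ j ∈ Finset.range (i + 1), ((2 * j + 1) ^ 2 - n ^ 2 : ℤ) := by
  rw [Finset.prod_range_succ', mul_comm (n ^ 2 - 1)]
  refine mul_dvd_mul ?_ ⟨-1, by push_cast; ring⟩
  rw [show (8 : ℤ) ^ i = ∏ _j ∈ Finset.range i, (8 : ℤ) by simp]
  refine Finset.prod_dvd_prod_of_dvd _ _ fun j _ => ?_
  have := dvd_sub (Int.eight_dvd_sq_sub_one_of_odd (odd_two_mul_add_one ((j : ℤ) + 1)))
    (Int.eight_dvd_sq_sub_one_of_odd hn)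
  push_cast
  convert this using 1
  ring

theorem prod_odd_sq_sub_sq_ne_zero {n : ℤ} {i : ℕ} (hi : 2 * (i : ℤ) ≤ n) :
    ∏ j ∈ Finset.range i, ((2 * j + 1) ^ 2 - n ^ 2 : ℤ) ≠ 0 :=
  Finset.prod_ne_zero_iff.mpr fun j hj => by
    have hlt : 2 * (j : ℤ) + 1 < n := by rw [Finset.mem_range] at hj; omega
    exact sub_ne_zero.mpr (pow_lt_pow_left₀ hlt (by positivity) two_ne_zero).ne

theorem padicValNat_two_factorial_two_mul_add_one_lt {i : ℕ} (hi : i ≠ 0) :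
    padicValNat 2 (2 * i + 1) ! < 2 * i := by
  rw [Nat.factorial_succ, padicValNat.mul (by omega) (Nat.factorial_ne_zero _),
    padicValNat.eq_zero_of_not_dvd (by omega), zero_add]
  exact padicValNat_factorial_lt_of_ne_zero 2 (by omega)

theorem chebyshev_higher_coeff_valuation_general (m : ℕ) (hodd : Odd m)
    (s : ℕ) (hs : s = max (padicValNat 2 (m + 1)) (padicValNat 2 (m - 1)))
    (i : ℕ) (hi1 : 1 < i) (hi2 : i ≤ (m - 1) / 2) :
    s + 1 ≤ padicValInt 2 ((Polynomial.Chebyshev.T ℤ m).coeff (2 * i + 1)) := by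
  have : Fact (Nat.Prime 2) := ⟨Nat.prime_two⟩
  obtain ⟨k, rfl⟩ : ∃ k, i = k + 1 := ⟨i - 1, by omega⟩
  have hmodd : Odd (m : ℤ) := by exact_mod_cast hodd
  set P := ∏ j ∈ Finset.range (k + 1), ((2 * j + 1) ^ 2 - (m : ℤ) ^ 2) with hPdef
  have hcoeff := factorial_mul_coeff_T_two_mul_add_one (R := ℤ) m (k + 1)
  simp only [Int.cast_id, ← hPdef] at hcoeff
  have hd : (derivative (T ℤ m)).eval 0 ≠ 0 := by
    rw [derivative_T_eval_zero_of_odd hmodd, Int.cast_id]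
    exact mul_ne_zero (by omega) (Units.ne_zero _)
  have hP : P ≠ 0 := prod_odd_sq_sub_sq_ne_zero (by omega)
  have hvP : s + 1 + 3 * k ≤ padicValInt 2 P := by
    have hdvd : (2 : ℤ) ^ (s + 1 + 3 * k) ∣ P := by
      rw [pow_add, pow_mul, hs]
      exact (mul_dvd_mul_right (two_pow_max_padicValNat_succ_dvd_sq_sub_one hodd) _).trans
        (sq_sub_one_mul_eight_pow_dvd_prod_odd_sq_sub_sq hmodd k)
    exact ((padicValInt_dvd_iff _ _).mp hdvd).resolve_left hP
  have hvfact := padicValNat_two_factorial_two_mul_add_one_lt (by omega : k + 1 ≠ 0)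
  have hc : (T ℤ m).coeff (2 * (k + 1) + 1) ≠ 0 := by
    rintro hc
    rw [hc, mul_zero] at hcoeff
    exact mul_ne_zero hd hP hcoeff.symm
  apply congrArg (padicValInt 2) at hcoeff
  rw [padicValInt.mul (by positivity) hc, padicValInt.mul hd hP, padicValInt.of_nat] at hcoeff
  omega

theorem chebyshev_higher_coeff_valuation (m : ℕ) (hm : 3 ≤ m) (hodd : Odd m)
    (s : ℕ) (hs : s = max (padicValNat 2 (m + 1)) (padicValNat 2 (m - 1)))
    (i : ℕ) (hi1 : 1 < i) (hi2 : i ≤ (m - 1) / 2) :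
    s + 1 ≤ padicValInt 2 ((Polynomial.Chebyshev.T ℤ m).coeff (2 * i + 1)) :=
  chebyshev_higher_coeff_valuation_general m hodd s hs i hi1 hi2
end

section
/- Let m = 2k+1 ≥ 3 be odd and write T_m(x) = Σ_{i=0}^{k} c_{2i+1} x^{2i+1}. For m = 2^s q + 1 (q odd, s ≥ 2) and 2^s − 1 ≤ i ≤ k, one has v₂(c_{2i+1}) ≥ 2i; in particular v₂(c_{2i+1}) > s + 2 for such i. -/
open Polynomial Polynomial.Chebyshev

private lemma coeff_X_mul'' (p : ℤ[X]) (d : ℕ) :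
    (X * p).coeff d = if 1 ≤ d then p.coeff (d - 1) else 0 := by
  rw [← pow_one (X : ℤ[X]), Polynomial.coeff_X_pow_mul']

private lemma cheb_coeff_rec (n d : ℕ) :
    (T ℤ ((n + 2 : ℕ) : ℤ)).coeff d
      = 2 * (if 1 ≤ d then (T ℤ ((n + 1 : ℕ) : ℤ)).coeff (d - 1) else 0)
        - (T ℤ (n : ℕ)).coeff d := by
  have h2 : ((n : ℤ) + 2) = ((n + 2 : ℕ) : ℤ) := by push_cast; ring
  have hrec : T ℤ ((n + 2 : ℕ) : ℤ) = 2 * X * T ℤ ((n + 1 : ℕ) : ℤ) - T ℤ (n : ℕ) := by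
    rw [← h2, T_add_two]; push_cast; ring_nf
  rw [hrec, Polynomial.coeff_sub]
  congr 1
  have h3 : (2 : ℤ[X]) * X * T ℤ ((n+1 : ℕ) : ℤ) = 2 * (X * T ℤ ((n+1 : ℕ) : ℤ)) := by ring
  rw [h3, Polynomial.coeff_ofNat_mul, coeff_X_mul'']

private lemma cheb_coeff_zero : ∀ n : ℕ, ∀ d : ℕ, n < d → (T ℤ n).coeff d = 0 := by
  intro n
  induction n using Nat.strong_induction_on with
  | _ n ih =>
    match n with
    | 0 =>
      intro d hd
      rw [(by norm_num : ((0:ℕ):ℤ) = 0), T_zero, Polynomial.coeff_one, if_neg (by omega : ¬ d = 0)]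
    | 1 =>
      intro d hd
      rw [(by norm_num : ((1:ℕ):ℤ) = 1), T_one, Polynomial.coeff_X, if_neg (by omega : ¬ 1 = d)]
    | (n + 2) =>
      intro d hd
      rw [cheb_coeff_rec]
      have hd1 : (T ℤ ((n+1 : ℕ) : ℤ)).coeff (d - 1) = 0 := ih (n+1) (by omega) (d-1) (by omega)
      have hd2 : (T ℤ (n : ℕ)).coeff d = 0 := ih n (by omega) d (by omega)
      rw [hd1, hd2]; simp

private lemma cheb_key : ∀ n : ℕ, ∀ d : ℕ, d ≤ n → (n - d) % 2 = 0 →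
    (2 : ℤ) ^ d ∣ 2 * (T ℤ n).coeff d ∧ 0 < (-1 : ℤ) ^ ((n - d) / 2) * (T ℤ n).coeff d := by
  intro n
  induction n using Nat.strong_induction_on with
  | _ n ih =>
    match n with
    | 0 =>
      intro d hd _
      interval_cases d
      simp [T_zero]
    | 1 =>
      intro d hd hpar
      have : d = 1 := by omega
      subst this
      simp [T_one]
    | (n + 2) =>
      intro d hd hpar
      rcases Nat.eq_zero_or_pos d with h0 | h0
      · -- d = 0
        subst h0
        have hco : (T ℤ ((n+2 : ℕ) : ℤ)).coeff 0 = - (T ℤ (n : ℕ)).coeff 0 := by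
          rw [cheb_coeff_rec]; simp
        have hihn := ih n (by omega) 0 (by omega) (by omega)
        constructor
        · rw [hco]; simpa using (dvd_refl (2 : ℤ)).mul_right _
        · rw [hco]
          have hexp : (n + 2 - 0) / 2 = (n - 0) / 2 + 1 := by omega
          rw [hexp, pow_succ]
          nlinarith [hihn.2]
      · -- d ≥ 1
        have hco : (T ℤ ((n+2 : ℕ) : ℤ)).coeff d
            = 2 * (T ℤ ((n+1 : ℕ) : ℤ)).coeff (d - 1) - (T ℤ (n : ℕ)).coeff d := by
          rw [cheb_coeff_rec, if_pos (show 1 ≤ d from h0)]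
        have hih1 := ih (n+1) (by omega) (d-1) (by omega) (by omega)
        have hbn : (2 : ℤ) ^ d ∣ 2 * (T ℤ (n : ℕ)).coeff d ∧
            0 ≤ (-1 : ℤ) ^ ((n + 2 - d) / 2) * (-(T ℤ (n : ℕ)).coeff d) := by
          rcases Nat.lt_or_ge n d with hlt | hle
          · have : (T ℤ (n : ℕ)).coeff d = 0 := cheb_coeff_zero n d hlt
            simp [this]
          · have hihn := ih n (by omega) d hle (by omega)
            refine ⟨hihn.1, ?_⟩
            have hexp : (n + 2 - d) / 2 = (n - d) / 2 + 1 := by omega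
            rw [hexp, pow_succ]
            nlinarith [hihn.2]
        have hexp1 : (n + 2 - d) / 2 = (n + 1 - (d - 1)) / 2 := by omega
        constructor
        · rw [hco]
          have h1 : (2 : ℤ) ^ d ∣ 2 * (2 * (T ℤ ((n+1 : ℕ) : ℤ)).coeff (d - 1)) := by
            have hpe : (2 : ℤ) ^ d = 2 ^ (d - 1) * 2 := by
              rw [← pow_succ]; congr 1; omega
            rw [hpe]
            calc (2:ℤ) ^ (d-1) * 2 ∣ (2 * (T ℤ ((n+1 : ℕ) : ℤ)).coeff (d - 1)) * 2 :=
                  mul_dvd_mul_right hih1.1 2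
              _ = 2 * (2 * (T ℤ ((n+1 : ℕ) : ℤ)).coeff (d - 1)) := by ring
          have heq : 2 * (2 * (T ℤ ((n+1 : ℕ) : ℤ)).coeff (d - 1) - (T ℤ (n : ℕ)).coeff d)
              = 2 * (2 * (T ℤ ((n+1 : ℕ) : ℤ)).coeff (d - 1)) - 2 * (T ℤ (n : ℕ)).coeff d := by
            ring
          rw [heq]
          exact dvd_sub h1 hbn.1
        · rw [hco]
          have hpos1 : 0 < (-1 : ℤ) ^ ((n + 2 - d) / 2)
              * (2 * (T ℤ ((n+1 : ℕ) : ℤ)).coeff (d - 1)) := by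
            rw [hexp1]
            nlinarith [hih1.2]
          nlinarith [hpos1, hbn.2]

private lemma pow_ineq : ∀ s : ℕ, 2 ≤ s → s + 5 ≤ 2 ^ (s + 1) := by
  intro s hs
  induction s with
  | zero => omega
  | succ t iht =>
    rcases Nat.lt_or_ge t 2 with h | h
    · interval_cases t
      · omega
      · norm_num
    · have := iht (by omega)
      have h2 : 2 ^ (t + 1 + 1) = 2 * 2 ^ (t + 1) := by ring
      omega

theorem chebyshev_large_coeff_valuation (s q : ℕ) (hs : 2 ≤ s) (hq : Odd q)
    (m k : ℕ) (hm : m = 2 ^ s * q + 1) (hk : m = 2 * k + 1) (hm3 : 3 ≤ m)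
    (i : ℕ) (hi1 : 2 ^ s - 1 ≤ i) (hi2 : i ≤ k) :
    2 * i ≤ padicValInt 2 ((Polynomial.Chebyshev.T ℤ m).coeff (2 * i + 1)) ∧
    s + 2 < padicValInt 2 ((Polynomial.Chebyshev.T ℤ m).coeff (2 * i + 1)) := by
  have hkey := cheb_key m (2 * i + 1) (by omega) (by omega)
  set c := (T ℤ (m : ℕ)).coeff (2 * i + 1) with hc
  have hne : c ≠ 0 := by
    intro h
    rw [h] at hkey
    simp at hkey
  have hdvd : (2 : ℤ) ^ (2 * i) ∣ c := by
    have h1 : (2 : ℤ) ^ (2 * i + 1) ∣ 2 * c := hkey.1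
    rw [pow_succ'] at h1
    exact (mul_dvd_mul_iff_left (by norm_num : (2:ℤ) ≠ 0)).mp h1
  haveI : Fact (Nat.Prime 2) := ⟨Nat.prime_two⟩
  have hval : 2 * i ≤ padicValInt 2 c := by
    have := (padicValInt_dvd_iff (p := 2) (2 * i) c).mp (by exact_mod_cast hdvd)
    tauto
  refine ⟨hval, lt_of_lt_of_le ?_ hval⟩
  have hpow := pow_ineq s hs
  have h2s : 1 ≤ 2 ^ s := Nat.one_le_two_pow
  have h2s1 : 2 ^ (s + 1) = 2 * 2 ^ s := by ring
  omega
end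

section
/- For every odd m ≥ 3 and every x ∈ ℤ₂, the derivative of the m-th Chebyshev polynomial satisfies T_m'(x) ≡ 1 (mod 4), i.e. T_m'(x) − 1 ∈ 4ℤ₂. -/
open Polynomial Polynomial.Chebyshev

lemma T_add_four_aux (R : Type*) [CommRing R] (n : ℤ) :
    T R (n + 4) = T R n + 4 * (X ^ 2 * T R (n + 2) - X * T R (n + 1)) := by
  have h1 := T_add_two R (n + 2)
  have h2 := T_add_two R (n + 1)
  have h3 := T_add_two R n
  rw [show n + 2 + 2 = n + 4 by ring, show n + 2 + 1 = n + 3 by ring] at h1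
  rw [show n + 1 + 2 = n + 3 by ring, show n + 1 + 1 = n + 2 by ring] at h2
  linear_combination h1 + 2 * X * h2 - h3

lemma T_odd_mod_four (R : Type*) [CommRing R] :
    ∀ k : ℕ, ∃ q : R[X], T R (2 * (k : ℤ) + 1) = X + 4 * q
  | 0 => ⟨0, by norm_num [T_one]⟩
  | 1 => by
      refine ⟨X ^ 3 - X, ?_⟩
      have h1 := T_add_two R 1
      have h2 := T_add_two R 0
      norm_num [T_zero, T_one] at h1 h2 ⊢
      rw [h1, h2]; ring
  | (k + 2) => by
      obtain ⟨q, hq⟩ := T_odd_mod_four R k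
      refine ⟨q + X ^ 2 * T R (2 * (k : ℤ) + 3) - X * T R (2 * (k : ℤ) + 2), ?_⟩
      have h := T_add_four_aux R (2 * (k : ℤ) + 1)
      rw [show 2 * ((k : ℕ) + 2 : ℕ) + 1 = 2 * (k : ℤ) + 1 + 4 by push_cast; ring, h,
        show 2 * (k : ℤ) + 1 + 2 = 2 * (k : ℤ) + 3 by ring,
        show 2 * (k : ℤ) + 1 + 1 = 2 * (k : ℤ) + 2 by ring, hq]
      ring

theorem chebyshev_derivative_mod_four (m : ℕ) (hm : 3 ≤ m) (hodd : Odd m) (x : ℤ_[2]) :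
    (4 : ℤ_[2]) ∣ (Polynomial.derivative (Polynomial.Chebyshev.T ℤ_[2] m)).eval x - 1 := by
  obtain ⟨j, hj⟩ := hodd
  obtain ⟨q, hq⟩ := T_odd_mod_four ℤ_[2] j
  rw [show (m : ℤ) = 2 * (j : ℤ) + 1 by rw [hj]; push_cast; ring, hq]
  refine ⟨(derivative q).eval x, ?_⟩
  simp [derivative_add, derivative_mul, derivative_ofNat, derivative_X]
end

section
/- Let m ≥ 3 be odd with s = max{v₂(m+1), v₂(m−1)} ≥ 2. Then for every n ≥ 1 and every t ∈ ℤ₂ with t odd (a 2-adic unit), the 2-adic valuation of T_m(2^n t) − 2^n t equals n + s. -/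
/-!
Write `m = 2n + 1`. The product-to-sum formula gives `T_m(x) - x = 2 (x² - 1) U_n(x) U_{n-1}(x)`.
Let `x` lie in the maximal ideal of a local ring whose residue field has characteristic 2.
Then `U_k(x)` is a unit for even `k` (it is `±1` modulo `x`), `T_k(x)` is associated to `x` for
odd `k` (by the same formula it lies in `x (1 + 2R)`), and the duplication formula
`U_{2k-1} = 2 T_k U_{k-1}` shows by induction on `e` that `U_{2^(e+1) c - 1}(x)` is associated to
`2^(e+1) x` for odd `c`. If `2^(e+2) c` (with `c` odd) is the one of `m ± 1` divisible by 4,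
exactly one of `n`, `n - 1` equals `2^(e+1) c - 1` and the other is even, so `T_m(x) - x` is
associated to `2^(e+2) x`, and `e + 2` is the `s` of the statement.
-/

open Polynomial Polynomial.Chebyshev IsLocalRing

theorem Polynomial.isUnit_eval_of_isUnit_eval_zero {R : Type*} [CommRing R] [IsLocalRing R]
    {x : R} (hx : x ∈ maximalIdeal R) {p : R[X]} (hp : IsUnit (p.eval 0)) :
    IsUnit (p.eval x) := by
  have hsub : p.eval x - p.eval 0 ∈ maximalIdeal R :=
    Ideal.mem_of_dvd _ (by simpa using sub_dvd_eval_sub x 0 p) hx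
  rw [← notMem_maximalIdeal] at hp ⊢
  rwa [← sub_add_cancel (p.eval x) (p.eval 0), Ideal.add_mem_iff_right _ hsub]

namespace Polynomial.Chebyshev

section Identities

variable (R : Type*) [CommRing R]

theorem two_mul_T_mul_U (m k : ℤ) : 2 * T R m * U R k = U R (k + m) + U R (k - m) := by
  induction m using Polynomial.Chebyshev.induct with
  | zero => simp [two_mul]
  | one => rw [T_one, U_add_one, U_sub_one]; ring
  | add_two m ih1 ih2 =>
    have h₁ := U_add_two R (k + m)
    have h₂ := U_sub_two R (k - m)
    have h₃ := T_add_two R m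
    linear_combination (norm := ring_nf) 2 * U R k * h₃ + 2 * (X : R[X]) * ih1 - ih2 - h₁ - h₂
  | neg_add_one m ih1 ih2 =>
    have h₁ := U_add_two R (k + (-m - 1))
    have h₂ := U_sub_two R (k - (-m - 1))
    have h₃ := T_add_two R (-m - 1)
    linear_combination (norm := ring_nf) 2 * U R k * h₃ + 2 * (X : R[X]) * ih1 - ih2 - h₁ - h₂

theorem U_two_mul_sub_one (n : ℤ) : U R (2 * n - 1) = 2 * T R n * U R (n - 1) := by
  rw [two_mul_T_mul_U, sub_sub_cancel_left, U_neg_one, add_zero]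
  ring_nf

theorem T_add_two_sub_T (n : ℤ) : T R (n + 2) - T R n = 2 * (X ^ 2 - 1) * U R n := by
  linear_combination 2 * one_sub_X_sq_mul_U_eq_pol_in_T R n - T_add_two R n

-- cos((a + b + 2)θ) - cos((a - b)θ) = -2 sin((a + 1)θ) sin((b + 1)θ)
theorem T_add_add_two_sub_T_sub (a b : ℤ) :
    T R (a + b + 2) - T R (a - b) = 2 * (X ^ 2 - 1) * U R a * U R b := by
  induction b using Polynomial.Chebyshev.induct with
  | zero => simpa using T_add_two_sub_T R a
  | one =>
    have h₁ := T_add_two_sub_T R (a + 1)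
    have h₂ := T_add_two_sub_T R (a - 1)
    have h₃ := U_add_one R a
    rw [U_one]
    linear_combination (norm := ring_nf) h₁ + h₂ + 2 * (X ^ 2 - 1 : R[X]) * h₃
  | add_two b ih1 ih2 =>
    have h₁ := T_add_two R (a + b + 2)
    have h₂ := T_sub_two R (a - b)
    have h₃ := U_add_two R b
    linear_combination (norm := ring_nf)
      h₁ - h₂ + 2 * (X : R[X]) * ih1 - ih2 - 2 * (X ^ 2 - 1 : R[X]) * U R a * h₃
  | neg_add_one b ih1 ih2 =>
    have h₁ := T_add_two R (a + (-b - 1) + 2)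
    have h₂ := T_sub_two R (a - (-b - 1))
    have h₃ := U_add_two R (-b - 1)
    linear_combination (norm := ring_nf)
      h₁ - h₂ + 2 * (X : R[X]) * ih1 - ih2 - 2 * (X ^ 2 - 1 : R[X]) * U R a * h₃

theorem T_two_mul_add_one_sub_X (n : ℤ) :
    T R (2 * n + 1) - X = 2 * (X ^ 2 - 1) * U R n * U R (n - 1) := by
  rw [← T_add_add_two_sub_T_sub, sub_sub_cancel, T_one]
  ring_nf

variable {R}

theorem T_two_mul_add_one_eval_sub_self (x : R) (n : ℤ) :
    (T R (2 * n + 1)).eval x - x = 2 * (x ^ 2 - 1) * (U R n).eval x * (U R (n - 1)).eval x := by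
  simpa using congrArg (eval x) (T_two_mul_add_one_sub_X R n)

theorem dvd_U_eval_of_odd (x : R) {n : ℤ} (hn : Odd n) : x ∣ (U R n).eval x := by
  simpa [hn] using sub_dvd_eval_sub x 0 (U R n)

end Identities

section LocalRing

variable {R : Type*} [CommRing R] [IsLocalRing R] {x : R}

theorem isUnit_T_eval_of_even (hx : x ∈ maximalIdeal R) {n : ℤ} (hn : Even n) :
    IsUnit ((T R n).eval x) :=
  isUnit_eval_of_isUnit_eval_zero hx <| by
    simpa [hn] using (n / 2).negOnePow.isUnit.map (Int.castRingHom R)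

theorem isUnit_U_eval_of_even (hx : x ∈ maximalIdeal R) {n : ℤ} (hn : Even n) :
    IsUnit ((U R n).eval x) :=
  isUnit_eval_of_isUnit_eval_zero hx <| by
    simpa [hn] using (n / 2).negOnePow.isUnit.map (Int.castRingHom R)

theorem associated_T_eval_of_odd (h2 : (2 : R) ∈ maximalIdeal R) {n : ℤ} (hn : Odd n) :
    Associated ((T R n).eval x) x := by
  obtain ⟨i, rfl⟩ := hn
  obtain ⟨y, hy⟩ : x ∣ (U R i).eval x * (U R (i - 1)).eval x := by
    rcases Int.even_or_odd i with hi | hi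
    · exact (dvd_U_eval_of_odd x (hi.sub_odd odd_one)).mul_left _
    · exact (dvd_U_eval_of_odd x hi).mul_right _
  have hunit : IsUnit (1 + 2 * ((x ^ 2 - 1) * y)) := by
    rw [← notMem_maximalIdeal, Ideal.add_mem_iff_left _ (Ideal.mul_mem_right _ _ h2)]
    exact notMem_maximalIdeal.2 isUnit_one
  have h := T_two_mul_add_one_eval_sub_self x i
  rw [mul_assoc _ ((U R i).eval x), hy] at h
  rw [show (T R (2 * i + 1)).eval x = x * (1 + 2 * ((x ^ 2 - 1) * y)) by
    linear_combination h]
  exact associated_mul_unit_left x _ hunit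

theorem associated_U_eval_two_pow_mul_sub_one (h2 : (2 : R) ∈ maximalIdeal R)
    (hx : x ∈ maximalIdeal R) {c : ℤ} (hc : Odd c) (e : ℕ) :
    Associated ((U R (2 ^ (e + 1) * c - 1)).eval x) (2 ^ (e + 1) * x) := by
  induction e with
  | zero =>
    rw [zero_add, pow_one, pow_one, U_two_mul_sub_one, eval_mul, eval_mul, eval_ofNat]
    simpa using ((Associated.refl 2).mul_mul (associated_T_eval_of_odd h2 hc)).mul_mul
      (associated_one_iff_isUnit.2 (isUnit_U_eval_of_even hx (hc.sub_odd odd_one)))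
  | succ e ih =>
    rw [pow_succ' (2 : ℤ), mul_assoc, U_two_mul_sub_one, eval_mul, eval_mul, eval_ofNat,
      pow_succ' (2 : R) (e + 1), mul_assoc (2 : R), mul_assoc (2 : R)]
    refine (Associated.refl 2).mul_mul ?_
    have hk : Even ((2 : ℤ) ^ (e + 1) * c) := (even_two.pow_of_ne_zero e.succ_ne_zero).mul_right c
    simpa using (associated_one_iff_isUnit.2 (isUnit_T_eval_of_even hx hk)).mul_mul ih

theorem associated_T_eval_sub_self (h2 : (2 : R) ∈ maximalIdeal R) (hx : x ∈ maximalIdeal R)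
    {c : ℤ} (hc : Odd c) (e : ℕ) {m : ℤ}
    (hm : m = 2 ^ (e + 2) * c - 1 ∨ m = 2 ^ (e + 2) * c + 1) :
    Associated ((T R m).eval x - x) (2 ^ (e + 2) * x) := by
  set k : ℤ := 2 ^ (e + 1) * c
  have hk : Even k := (even_two.pow_of_ne_zero e.succ_ne_zero).mul_right c
  have hU := associated_U_eval_two_pow_mul_sub_one h2 hx hc e
  have hsq : IsUnit (x ^ 2 - 1) := by
    have := isUnit_eval_of_isUnit_eval_zero hx (p := X ^ 2 - 1) (by simp)
    rwa [eval_sub, eval_pow, eval_X, eval_one] at this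
  have hpow : (2 : R) ^ (e + 2) * x = 2 * 1 * (2 ^ (e + 1) * x) * 1 := by ring
  rw [hpow]
  rcases hm with rfl | rfl
  · rw [show 2 ^ (e + 2) * c - 1 = 2 * (k - 1) + 1 by ring, T_two_mul_add_one_eval_sub_self]
    have hV : IsUnit ((U R (k - 1 - 1)).eval x) :=
      isUnit_U_eval_of_even hx (by simpa [sub_sub] using hk.sub even_two)
    exact (((Associated.refl 2).mul_mul (associated_one_iff_isUnit.2 hsq)).mul_mul hU).mul_mul
      (associated_one_iff_isUnit.2 hV)
  · rw [show 2 ^ (e + 2) * c + 1 = 2 * k + 1 by ring, T_two_mul_add_one_eval_sub_self,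
      mul_right_comm _ ((U R k).eval x)]
    exact (((Associated.refl 2).mul_mul (associated_one_iff_isUnit.2 hsq)).mul_mul hU).mul_mul
      (associated_one_iff_isUnit.2 (isUnit_U_eval_of_even hx hk))

end LocalRing

end Polynomial.Chebyshev

theorem padicValNat_two_pow_mul_of_odd {c : ℕ} (hc : Odd c) (k : ℕ) :
    padicValNat 2 (2 ^ k * c) = k := by
  rw [padicValNat_base_pow_mul one_lt_two hc.pos.ne',
    padicValNat.eq_zero_of_not_dvd hc.not_two_dvd_nat, zero_add]

theorem Nat.exists_two_pow_mul_odd_sub_one_or_add_one {m : ℕ} (hm : 3 ≤ m) (hodd : Odd m) :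
    ∃ (e : ℕ) (c : ℤ), Odd c ∧
      ((m : ℤ) = 2 ^ (e + 2) * c - 1 ∨ (m : ℤ) = 2 ^ (e + 2) * c + 1) ∧
      max (padicValNat 2 (m + 1)) (padicValNat 2 (m - 1)) = e + 2 := by
  obtain ⟨k, hk0, hk⟩ : ∃ k ≠ 0, m + 1 = 4 * k ∨ m - 1 = 4 * k := by
    obtain ⟨j, rfl⟩ := hodd
    rcases Nat.even_or_odd j with ⟨i, rfl⟩ | ⟨i, rfl⟩
    · exact ⟨i, by omega, by omega⟩
    · exact ⟨i + 1, by omega, by omega⟩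
  obtain ⟨e, c, hc, hkc⟩ := Nat.exists_eq_two_pow_mul_odd hk0
  have hv4 : padicValNat 2 (4 * k) = e + 2 := by
    rw [hkc, ← mul_assoc, show 4 * 2 ^ e = 2 ^ (e + 2) by ring, padicValNat_two_pow_mul_of_odd hc]
  have hv2 {j : ℕ} (hj : Odd j) : padicValNat 2 (2 * j) = 1 := by
    simpa using padicValNat_two_pow_mul_of_odd hj 1
  have hkz : (k : ℤ) = 2 ^ e * c := by exact_mod_cast hkc
  refine ⟨e, c, hc.natCast, ?_⟩
  rcases hk with hk | hk
  · have hk' : (m : ℤ) + 1 = 4 * k := by exact_mod_cast hk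
    refine ⟨Or.inl (by linear_combination hk' + 4 * hkz), ?_⟩
    rw [hk, show m - 1 = 2 * (2 * k - 1) by omega, hv4, hv2 ⟨k - 1, by omega⟩]
    omega
  · have hk' : (m : ℤ) - 1 = 4 * k := by omega
    refine ⟨Or.inr (by linear_combination hk' + 4 * hkz), ?_⟩
    rw [hk, show m + 1 = 2 * (2 * k + 1) by omega, hv4, hv2 (odd_two_mul_add_one k)]
    omega

theorem PadicInt.valuation_eq_of_associated {p : ℕ} [Fact p.Prime] {a b : ℤ_[p]}
    (h : Associated a b) : a.valuation = b.valuation := by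
  obtain ⟨u, rfl⟩ := h
  rcases eq_or_ne a 0 with rfl | ha
  · simp
  have hu := valuation_mul u.ne_zero u⁻¹.ne_zero
  rw [Units.mul_inv, valuation_one] at hu
  rw [valuation_mul ha u.ne_zero]
  omega

theorem chebyshev_valuation_near_zero (m : ℕ) (hm : 3 ≤ m) (hodd : Odd m)
    (s : ℕ) (hs : s = max (padicValNat 2 (m + 1)) (padicValNat 2 (m - 1)))
    (n : ℕ) (hn : 1 ≤ n) (t : ℤ_[2]) (ht : ¬ (2 : ℤ_[2]) ∣ t) :
    ((Polynomial.Chebyshev.T ℤ_[2] m).eval (2 ^ n * t) - 2 ^ n * t).valuation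
      = (n : ℤ) + (s : ℤ) := by
  obtain ⟨e, c, hc, hmc, hse⟩ := Nat.exists_two_pow_mul_odd_sub_one_or_add_one hm hodd
  have hmax : maximalIdeal ℤ_[2] = Ideal.span {2} := by
    simpa using PadicInt.maximalIdeal_eq_span_p (p := 2)
  have h2 : (2 : ℤ_[2]) ∈ maximalIdeal ℤ_[2] := hmax ▸ Ideal.mem_span_singleton_self 2
  have htu : IsUnit t := by
    rwa [← notMem_maximalIdeal, hmax, Ideal.mem_span_singleton]
  have hx : 2 ^ n * t ∈ maximalIdeal ℤ_[2] :=
    Ideal.mul_mem_right _ _ (Ideal.pow_mem_of_mem _ h2 n (by omega))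
  have hdiff := associated_T_eval_sub_self h2 hx hc e hmc
  have hpow : Associated ((2 : ℤ_[2]) ^ (e + 2) * (2 ^ n * t)) (2 ^ (n + s)) := by
    rw [hs, hse, ← mul_assoc, ← pow_add, add_comm (e + 2)]
    exact associated_mul_unit_left _ _ htu
  have hval2 : (2 : ℤ_[2]).valuation = 1 := by simpa using PadicInt.valuation_p (p := 2)
  rw [PadicInt.valuation_eq_of_associated (hdiff.trans hpow), PadicInt.valuation_pow, hval2]
  push_cast
  ring
end

section
/- For every even integer m ≥ 2 and every x ∈ ℤ₂, the iterates of T_m converge to 1: lim_{k→∞} T_m^{∘k}(x) = 1 in the 2-adic topology. -/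
open Polynomial Polynomial.Chebyshev

/-!
Since `T (2n) = T 2 ∘ T n = 2 (T n)² - 1`, every even-index Chebyshev polynomial is `2` times a
polynomial plus a constant. Polynomials over `ℤ_[2]` are `1`-Lipschitz, because `y - z` divides
`P(y) - P(z)`, so the extra factor `2` makes `T (2n)` a `1/2`-contraction of the complete space
`ℤ_[2]`. Its iterates therefore converge to its unique fixed point, which is `1`.
-/

theorem PadicInt.norm_eval_sub_eval_le {p : ℕ} [Fact p.Prime] (P : ℤ_[p][X]) (y z : ℤ_[p]) :
    ‖P.eval y - P.eval z‖ ≤ ‖y - z‖ := by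
  obtain ⟨c, hc⟩ := sub_dvd_eval_sub y z P
  rw [hc, norm_mul]
  exact mul_le_of_le_one_right (norm_nonneg _) (PadicInt.norm_le_one c)

theorem Polynomial.Chebyshev.T_eval_two_mul {R : Type*} [CommRing R] (n : ℤ) (y : R) :
    (T R (2 * n)).eval y = 2 * ((T R n) ^ 2).eval y - 1 := by
  simp [T_mul, T_two]

theorem contractingWith_eval_T_two_mul (n : ℤ) :
    ContractingWith 2⁻¹ (fun y : ℤ_[2] => (T ℤ_[2] (2 * n)).eval y) := by
  refine ⟨by norm_num, LipschitzWith.of_dist_le_mul fun y z => ?_⟩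
  have h2 : ‖(2 : ℤ_[2])‖ = 2⁻¹ := by simpa using PadicInt.norm_p (p := 2)
  calc dist ((T ℤ_[2] (2 * n)).eval y) ((T ℤ_[2] (2 * n)).eval z)
      = ‖(2 : ℤ_[2])‖ * ‖(T ℤ_[2] n ^ 2).eval y - (T ℤ_[2] n ^ 2).eval z‖ := by
        rw [dist_eq_norm, T_eval_two_mul, T_eval_two_mul, ← norm_mul]
        ring_nf
    _ ≤ 2⁻¹ * dist y z := by
        rw [h2, dist_eq_norm]
        gcongr
        exact PadicInt.norm_eval_sub_eval_le _ y z

theorem chebyshev_even_iterates_tendsto_one_general (m : ℕ) (heven : Even m) (x : ℤ_[2]) :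
    Filter.Tendsto (fun k => (fun y => (Polynomial.Chebyshev.T ℤ_[2] m).eval y)^[k] x)
      Filter.atTop (nhds 1) := by
  obtain ⟨n, rfl⟩ := heven
  have hcast : ((n + n : ℕ) : ℤ) = 2 * n := by push_cast; ring
  rw [hcast]
  have hf := contractingWith_eval_T_two_mul n
  have hfix : Function.IsFixedPt (fun y : ℤ_[2] => (T ℤ_[2] (2 * n)).eval y) 1 := T_eval_one ℤ_[2] _
  rw [hf.fixedPoint_unique hfix]
  exact hf.tendsto_iterate_fixedPoint x

theorem chebyshev_even_iterates_tendsto_one (m : ℕ) (hm : 2 ≤ m) (heven : Even m) (x : ℤ_[2]) :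
    Filter.Tendsto (fun k => (fun y => (Polynomial.Chebyshev.T ℤ_[2] m).eval y)^[k] x)
      Filter.atTop (nhds 1) :=
  chebyshev_even_iterates_tendsto_one_general m heven x
end

section
/- Let f ∈ ℤ_p[x] and let E ⊆ ℤ_p be a compact f-invariant set. Then f : E → E is minimal (every forward orbit is dense in E) if and only if for every n ≥ 1 the induced map f_n on E/p^nℤ_p, defined by f_n(x mod p^n) = f(x) mod p^n, is minimal (i.e., acts as a single cycle on the finite set E/p^nℤ_p). -/
open Polynomial

private lemma iter_comm (p : ℕ) [Fact p.Prime] (F : Polynomial ℤ_[p]) (n k : ℕ) (x : ℤ_[p]) :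
    ((F.map (PadicInt.toZModPow n)).eval)^[k] (PadicInt.toZModPow n x)
      = PadicInt.toZModPow n (F.eval^[k] x) := by
  induction k with
  | zero => rfl
  | succ k ih =>
    rw [Function.iterate_succ_apply', Function.iterate_succ_apply', ih, eval_map,
      Polynomial.eval₂_at_apply]

private lemma toZModPow_eq_iff (p : ℕ) [Fact p.Prime] (n : ℕ) (z y : ℤ_[p]) :
    PadicInt.toZModPow n z = PadicInt.toZModPow n y ↔ ‖z - y‖ ≤ (p : ℝ) ^ (-n : ℤ) := by
  rw [PadicInt.norm_le_pow_iff_mem_span_pow, ← PadicInt.ker_toZModPow, RingHom.mem_ker,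
    map_sub, sub_eq_zero]

theorem minimal_iff_induced_minimal (p : ℕ) [Fact p.Prime]
    (F : Polynomial ℤ_[p]) (E : Set ℤ_[p]) (hE : IsCompact E)
    (hinv : Set.MapsTo F.eval E E) :
    (∀ x ∈ E, ∀ y ∈ E, y ∈ closure (Set.range fun k : ℕ => F.eval^[k] x)) ↔
      (∀ n : ℕ, 1 ≤ n → ∀ a ∈ PadicInt.toZModPow n '' E, ∀ b ∈ PadicInt.toZModPow n '' E,
        ∃ k : ℕ, ((F.map (PadicInt.toZModPow n)).eval)^[k] a = b) := by
  constructor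
  · intro h n _ a ⟨x, hx, hax⟩ b ⟨y, hy, hby⟩
    have hcl := h x hx y hy
    rw [Metric.mem_closure_iff] at hcl
    have hpos : (0 : ℝ) < (p : ℝ) ^ (-n : ℤ) := by
      apply zpow_pos
      exact_mod_cast (Fact.out : p.Prime).pos
    obtain ⟨z, ⟨k, rfl⟩, hz⟩ := hcl _ hpos
    refine ⟨k, ?_⟩
    rw [← hax, ← hby, iter_comm]
    rw [toZModPow_eq_iff]
    rw [dist_eq_norm] at hz
    calc ‖F.eval^[k] x - y‖ = ‖y - F.eval^[k] x‖ := (norm_sub_rev _ _)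
      _ ≤ (p : ℝ) ^ (-n : ℤ) := le_of_lt hz
  · intro h x hx y hy
    rw [Metric.mem_closure_iff]
    intro ε hε
    obtain ⟨n, hn⟩ := PadicInt.exists_pow_neg_lt p hε
    obtain ⟨k, hk⟩ := h (n + 1) (Nat.le_add_left 1 n) _ ⟨x, hx, rfl⟩ _ ⟨y, hy, rfl⟩
    refine ⟨F.eval^[k] x, ⟨k, rfl⟩, ?_⟩
    rw [iter_comm, eq_comm, toZModPow_eq_iff] at hk
    rw [dist_eq_norm]
    refine lt_of_le_of_lt (le_trans hk ?_) hn
    apply zpow_le_zpow_right₀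
    · exact_mod_cast (Fact.out : p.Prime).one_lt.le
    · simp
end

section
/- Let m ≥ 3 be odd with s = max{v₂(m+1), v₂(m−1)}, and fix n ≥ 1 and 0 ≤ i < 2^{s−1}. Then the ball E = 2^n(1+2i) + 2^{n+s}ℤ₂ is invariant under T_m, i.e. T_m(E) ⊆ E. -/
open Polynomial Polynomial.Chebyshev

private theorem two_T_mul_U (R : Type*) [CommRing R] (j k : ℤ) :
    2 * T R j * U R k = U R (k + j) + U R (k - j) := by
  induction j using Polynomial.Chebyshev.induct with
  | zero => simp; ring
  | one =>
    have h := U_add_one R k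
    simp only [T_one]
    linear_combination (norm := ring_nf) - h
  | add_two n ih1 ih2 =>
    have hT := T_add_two R n
    have hU1 := U_add_two R (k + n)
    have hU2 := U_sub_two R (k - n)
    linear_combination (norm := ring_nf) 2 * U R k * hT + 2 * (X : R[X]) * ih1 - ih2 - hU1 - hU2
  | neg_add_one n ih1 ih2 =>
    have hT := T_add_two R (-n - 1)
    have hU1 := U_add_two R (k - n - 1)
    have hU2 := U_sub_two R (k + n + 1)
    linear_combination (norm := ring_nf) 2 * U R k * hT + 2 * (X : R[X]) * ih1 - ih2 - hU1 - hU2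

/-- Product formula: `T (j-k) - T (j+k+2) = 2 (1 - X^2) U j U k`. -/
private theorem T_sub_T (R : Type*) [CommRing R] (j k : ℤ) :
    T R (j - k) - T R (j + k + 2) = 2 * (1 - X ^ 2) * U R j * U R k := by
  have h1 := one_sub_X_sq_mul_U_eq_pol_in_T R j
  have h2 := two_T_mul_U R (j + 1) k
  have h3 := two_T_mul_U R (j + 2) k
  have h4 := U_eq_X_mul_U_add_T R (j + k + 1)
  have h5 := T_eq_U_sub_X_mul_U R (k - j)
  have h6 := U_eq R (k - j)
  have h7 := T_neg R (k - j)
  linear_combination (norm := ring_nf) -2 * U R k * h1 - (X : R[X]) * h2 + h3 + h4 + h5 + h6 + h7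

/-- Double-angle formula: `U (2j-1) = 2 T j U (j-1)`. -/
private theorem U_double (R : Type*) [CommRing R] (j : ℤ) :
    U R (2 * j - 1) = 2 * T R j * U R (j - 1) := by
  have h := two_T_mul_U R j (j - 1)
  have h2 : U R (j - 1 - j) = 0 := by rw [show j - 1 - j = -1 by ring, U_neg_one]
  linear_combination (norm := ring_nf) - h - h2

private theorem T_odd_dvd {R : Type*} [CommRing R] (x : R) (j : ℕ) :
    x ∣ (T R (2 * (j : ℤ) + 1)).eval x := by
  induction j with
  | zero => simp
  | succ j ih =>
    have h : T R (2 * ((j : ℤ) + 1) + 1) = 2 * X * T R (2 * (j : ℤ) + 2) - T R (2 * (j : ℤ) + 1) := by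
      rw [show 2 * ((j : ℤ) + 1) + 1 = 2 * (j : ℤ) + 1 + 2 by ring, T_add_two]
      ring_nf
    push_cast
    rw [h]
    simp only [eval_sub, eval_mul, eval_ofNat, eval_X]
    exact dvd_sub (Dvd.dvd.mul_right (Dvd.dvd.mul_left (dvd_refl x) 2) _) ih

private theorem U_pow_dvd {R : Type*} [CommRing R] (x : R) :
    ∀ j : ℕ, 1 ≤ j → (2 : R) ^ (padicValNat 2 j + 1) * x ∣ (U R (2 * (j : ℤ) - 1)).eval x := by
  intro j
  induction j using Nat.strong_induction_on with
  | _ j ih =>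
    intro hj
    rcases Nat.even_or_odd j with he | ho
    · -- j even, j = 2r
      obtain ⟨r, rfl⟩ := he
      have hr : 1 ≤ r := by omega
      have hval : padicValNat 2 (r + r) = padicValNat 2 r + 1 := by
        rw [show r + r = 2 * r by ring, padicValNat.mul (by norm_num) (by omega),
          padicValNat.self (by norm_num)]
        ring
      obtain ⟨c, hc⟩ := ih r (by omega) hr
      rw [U_double]
      have hev : (2 * T R ((r : ℤ) + r) * U R ((r : ℤ) + r - 1)).eval x
          = 2 * (T R ((r : ℤ) + r)).eval x * (U R (2 * (r : ℤ) - 1)).eval x := by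
        rw [show ((r : ℤ) + r - 1) = 2 * (r : ℤ) - 1 by ring]
        simp
      push_cast
      rw [hev, hc, hval]
      exact ⟨(T R ((r : ℤ) + r)).eval x * c, by ring⟩
    · -- j odd
      have hval : padicValNat 2 j = 0 :=
        padicValNat.eq_zero_of_not_dvd (by rwa [Nat.two_dvd_ne_zero, ← Nat.odd_iff])
      obtain ⟨r, rfl⟩ := ho
      obtain ⟨c, hc⟩ := T_odd_dvd (R := R) x r
      rw [U_double]
      have hev : (2 * T R ((2 * r + 1 : ℕ) : ℤ) * U R (((2 * r + 1 : ℕ) : ℤ) - 1)).eval x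
          = 2 * (T R (2 * (r : ℤ) + 1)).eval x * (U R (((2 * r + 1 : ℕ) : ℤ) - 1)).eval x := by
        push_cast
        simp
      rw [hval, pow_one, hev, hc]
      exact ⟨c * (U R (((2 * r + 1 : ℕ) : ℤ) - 1)).eval x, by ring⟩

theorem chebyshev_ball_invariant_near_zero (m : ℕ) (hm : 3 ≤ m) (hodd : Odd m)
    (s : ℕ) (hs : s = max (padicValNat 2 (m + 1)) (padicValNat 2 (m - 1)))
    (n : ℕ) (hn : 1 ≤ n) (i : ℕ) (hi : i < 2 ^ (s - 1)) :
    Set.MapsTo (fun x => (Polynomial.Chebyshev.T ℤ_[2] m).eval x)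
      {x : ℤ_[2] | (2 ^ (n + s) : ℤ_[2]) ∣ x - 2 ^ n * (1 + 2 * i)}
      {x : ℤ_[2] | (2 ^ (n + s) : ℤ_[2]) ∣ x - 2 ^ n * (1 + 2 * i)} := by
  obtain ⟨t, rfl⟩ := hodd
  have ht : 1 ≤ t := by omega
  intro x hx
  simp only [Set.mem_setOf_eq] at hx ⊢
  -- 2^n ∣ x
  have hxn : (2 : ℤ_[2]) ^ n ∣ x := by
    have h1 : (2 : ℤ_[2]) ^ n ∣ x - 2 ^ n * (1 + 2 * i) :=
      dvd_trans (pow_dvd_pow 2 (Nat.le_add_right n s)) hx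
    have := dvd_add h1 (Dvd.intro _ rfl : (2 : ℤ_[2]) ^ n ∣ 2 ^ n * (1 + 2 * i))
    simpa using this
  -- key: 2^{n+s} ∣ T_m(x) - x
  have hvmul : ∀ k : ℕ, k ≠ 0 → padicValNat 2 (2 * k) = padicValNat 2 k + 1 := by
    intro k hk
    rw [padicValNat.mul (by norm_num) hk, padicValNat.self (by norm_num), add_comm]
  have hvodd : ∀ k : ℕ, Odd k → padicValNat 2 k = 0 := fun k hk =>
    padicValNat.eq_zero_of_not_dvd (by
      rw [Nat.two_dvd_ne_zero, ← Nat.odd_iff]; exact hk)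
  have hs1 : 1 ≤ s := by
    have h1 : padicValNat 2 (2 * t + 1 + 1) = padicValNat 2 (t + 1) + 1 := by
      rw [show 2 * t + 1 + 1 = 2 * (t + 1) by ring]; exact hvmul _ (by omega)
    have h2 : padicValNat 2 (2 * t + 1 + 1) ≤ s := hs ▸ le_max_left _ _
    omega
  have hid : (T ℤ_[2] 1).eval x - (T ℤ_[2] (2 * (t : ℤ) + 1)).eval x
      = 2 * (1 - x ^ 2) * (U ℤ_[2] (t : ℤ)).eval x * (U ℤ_[2] ((t : ℤ) - 1)).eval x := by
    have h := T_sub_T ℤ_[2] (t : ℤ) ((t : ℤ) - 1)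
    rw [show (t : ℤ) - ((t : ℤ) - 1) = 1 by ring,
      show (t : ℤ) + ((t : ℤ) - 1) + 2 = 2 * (t : ℤ) + 1 by ring] at h
    have h' := congrArg (eval x) h
    simp only [eval_sub, eval_mul, eval_pow, eval_one, eval_ofNat, eval_X] at h'
    exact h'
  have hUdvd : (2 : ℤ_[2]) ^ (s - 1) * x ∣
      (U ℤ_[2] (t : ℤ)).eval x * (U ℤ_[2] ((t : ℤ) - 1)).eval x := by
    rcases Nat.even_or_odd t with he | ho
    · obtain ⟨r, rfl⟩ := he
      have hr : 1 ≤ r := by omega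
      have hsv : s = padicValNat 2 r + 2 := by
        have h1 : 2 * (r + r) + 1 + 1 = 2 * (2 * r + 1) := by ring
        have h2 : 2 * (r + r) + 1 - 1 = 2 * (2 * r) := by omega
        rw [hs, h1, h2, hvmul _ (by omega), hvmul _ (by omega), hvmul _ (by omega),
          hvodd _ ⟨r, rfl⟩]
        omega
      have hdvd := U_pow_dvd (R := ℤ_[2]) x r hr
      rw [show ((r + r : ℕ) : ℤ) - 1 = 2 * (r : ℤ) - 1 by push_cast; ring]
      have hexp : s - 1 = padicValNat 2 r + 1 := by omega
      rw [hexp]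
      exact Dvd.dvd.mul_left hdvd _
    · obtain ⟨r, rfl⟩ := ho
      have hsv : s = padicValNat 2 (r + 1) + 2 := by
        have h1 : 2 * (2 * r + 1) + 1 + 1 = 2 * (2 * (r + 1)) := by ring
        have h2 : 2 * (2 * r + 1) + 1 - 1 = 2 * (2 * r + 1) := by omega
        rw [hs, h1, h2, hvmul _ (by omega), hvmul _ (by omega), hvmul _ (by omega),
          hvodd _ ⟨r, rfl⟩]
        omega
      have hdvd := U_pow_dvd (R := ℤ_[2]) x (r + 1) (by omega)
      rw [show ((2 * r + 1 : ℕ) : ℤ) = 2 * ((r + 1 : ℕ) : ℤ) - 1 by push_cast; ring]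
      have hexp : s - 1 = padicValNat 2 (r + 1) + 1 := by omega
      rw [hexp]
      exact Dvd.dvd.mul_right hdvd _
  have hkey : (2 : ℤ_[2]) ^ (n + s) ∣ (T ℤ_[2] (2 * (t : ℤ) + 1)).eval x - x := by
    rw [← dvd_neg]
    have hTone : (T ℤ_[2] 1).eval x = x := by simp
    obtain ⟨c, hc⟩ := hUdvd
    obtain ⟨d, hd⟩ := hxn
    have : -((T ℤ_[2] (2 * (t : ℤ) + 1)).eval x - x)
        = 2 ^ (n + s) * ((1 - x ^ 2) * d * c) := by
      have e1 : x - (T ℤ_[2] (2 * (t : ℤ) + 1)).eval x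
          = 2 * (1 - x ^ 2) * (2 ^ (s - 1) * x * c) := by
        linear_combination hid + 2 * (1 - x ^ 2) * hc - hTone
      have e2 : (2 : ℤ_[2]) * 2 ^ (s - 1) = 2 ^ s := by
        rw [← pow_succ']
        congr 1
        omega
      calc -((T ℤ_[2] (2 * (t : ℤ) + 1)).eval x - x)
          = 2 * (1 - x ^ 2) * (2 ^ (s - 1) * x * c) := by rw [← e1]; ring
        _ = (2 * 2 ^ (s - 1)) * x * ((1 - x ^ 2) * c) := by ring
        _ = 2 ^ s * (2 ^ n * d) * ((1 - x ^ 2) * c) := by rw [e2, hd]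
        _ = 2 ^ (n + s) * ((1 - x ^ 2) * d * c) := by rw [pow_add]; ring
    exact Dvd.intro _ this.symm
  have hfin : ((2:ℤ_[2]) ^ (n + s)) ∣ ((T ℤ_[2] (2 * (t:ℤ) + 1)).eval x - x) + (x - 2 ^ n * (1 + 2 * i)) :=
    dvd_add hkey hx
  have hcast : ((2 * t + 1 : ℕ) : ℤ) = 2 * (t : ℤ) + 1 := by push_cast; ring
  rw [hcast]
  simpa using hfin
end

section
/- Let m ≥ 3 be odd with s = max{v₂(m+1), v₂(m−1)}, and fix n ≥ 2 and 0 ≤ i < 2^{s}. Then the ball E = 1 + 2^n(1+2i) + 2^{n+s+1}ℤ₂ is invariant under T_m, i.e. T_m(E) ⊆ E. -/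
open Polynomial Polynomial.Chebyshev

namespace ChebAux

/-- `z^k + y^k = 2 T_k(a)` where `z = a + √(a²-1)`, `y = a - √(a²-1)`. -/
lemma pow_add_pow_eq_T (a : ℤ) (k : ℕ) :
    (⟨a, 1⟩ : ℤ√(a^2-1)) ^ k + (⟨a, -1⟩ : ℤ√(a^2-1)) ^ k
      = ((2 * (T ℤ k).eval a : ℤ) : ℤ√(a^2-1)) := by
  set d : ℤ := a^2-1 with hd
  set z : ℤ√d := ⟨a, 1⟩ with hzdef
  set y : ℤ√d := ⟨a, -1⟩ with hydef
  have hz2 : z^2 = ((2*a : ℤ) : ℤ√d) * z - 1 := by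
    rw [Zsqrtd.ext_iff]
    constructor <;>
      simp [hzdef, pow_two, Zsqrtd.re_mul, Zsqrtd.im_mul, Zsqrtd.re_sub, Zsqrtd.im_sub,
        Zsqrtd.re_intCast, Zsqrtd.im_intCast, hd] <;> ring
  have hy2 : y^2 = ((2*a : ℤ) : ℤ√d) * y - 1 := by
    rw [Zsqrtd.ext_iff]
    constructor <;>
      simp [hydef, pow_two, Zsqrtd.re_mul, Zsqrtd.im_mul, Zsqrtd.re_sub, Zsqrtd.im_sub,
        Zsqrtd.re_intCast, Zsqrtd.im_intCast, hd] <;> ring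
  induction k using Nat.twoStepInduction with
  | zero =>
    simp only [pow_zero, Nat.cast_zero, T_zero, eval_one, mul_one]
    push_cast; ring
  | one =>
    simp only [pow_one, Nat.cast_one, T_one, eval_X]
    rw [Zsqrtd.ext_iff]
    constructor <;> simp [hzdef, hydef, Zsqrtd.re_intCast, Zsqrtd.im_intCast] <;> ring
  | more k ih1 ih2 =>
    have hT : (2*(T ℤ (k+2 : ℕ)).eval a : ℤ)
        = 2*a*(2*(T ℤ (k+1 : ℕ)).eval a) - (2*(T ℤ (k : ℕ)).eval a) := by
      have : ((k+2 : ℕ) : ℤ) = (k : ℤ) + 2 := by push_cast; ring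
      rw [this, T_add_two]
      have : ((k+1 : ℕ) : ℤ) = (k : ℤ) + 1 := by push_cast; ring
      rw [this]
      simp only [eval_sub, eval_mul, eval_ofNat, eval_X]
      ring
    calc z^(k+2) + y^(k+2)
        = ((2*a : ℤ) : ℤ√d) * (z^(k+1) + y^(k+1)) - (z^k + y^k) := by
          linear_combination z^k * hz2 + y^k * hy2
      _ = ((2*a : ℤ) : ℤ√d) * ((2 * (T ℤ (k+1 : ℕ)).eval a : ℤ) : ℤ√d)
            - ((2 * (T ℤ (k : ℕ)).eval a : ℤ) : ℤ√d) := by rw [ih2, ih1]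
      _ = ((2 * (T ℤ (k+2 : ℕ)).eval a : ℤ) : ℤ√d) := by
          rw [hT]; push_cast; ring

/-- Key integer lemma. -/
lemma int_key (m s1 s2 q1 q2 : ℕ) (a b : ℤ)
    (hm : 3 ≤ m)
    (h1 : m + 1 = 2^s1 * q1) (h2 : m - 1 = 2^s2 * q2)
    (hq1 : Odd q1) (hq2 : Odd q2) (hs1 : 1 ≤ s1) (hs2 : 1 ≤ s2)
    (hab : a - 1 = 2*b) :
    (2:ℤ)^(s1+s2+1) * (a - 1) ∣ 2 * ((T ℤ m).eval a - a) := by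
  set d : ℤ := a^2-1 with hd
  set z : ℤ√d := ⟨a, 1⟩ with hzdef
  set y : ℤ√d := ⟨a, -1⟩ with hydef
  have hzy : z * y = 1 := by
    rw [Zsqrtd.ext_iff]
    constructor <;>
      simp [hzdef, hydef, Zsqrtd.re_mul, Zsqrtd.im_mul, hd] <;> ring
  set δ : ℤ√d := z - 1 with hδdef
  have hd2 : δ^2 = ((4*b : ℤ) : ℤ√d) * z := by
    rw [Zsqrtd.ext_iff]
    have hb : 2*b = a - 1 := hab.symm
    constructor <;>
      simp [hδdef, hzdef, pow_two, Zsqrtd.re_mul, Zsqrtd.im_mul, Zsqrtd.re_sub, Zsqrtd.im_sub,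
        Zsqrtd.re_intCast, Zsqrtd.im_intCast, hd] <;> nlinarith [hab]
  have hsq : z^2 - 1 = 2 * (⟨a^2-1, a⟩ : ℤ√d) := by
    rw [Zsqrtd.ext_iff]
    constructor <;>
      simp [hzdef, pow_two, Zsqrtd.re_mul, Zsqrtd.im_mul, Zsqrtd.re_sub, Zsqrtd.im_sub, hd] <;>
        ring
  -- geometric sums
  set S : ℕ → ℤ√d := fun q => ∑ j ∈ Finset.range q, z^j with hSdef
  have hgeom : ∀ q : ℕ, S q * δ = z^q - 1 := fun q => by
    rw [hSdef, hδdef]; exact geom_sum_mul z q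
  have hSsub : ∀ q : ℕ, ∃ W, S q = (q : ℤ√d) + δ * W := by
    intro q
    have hdvd : δ ∣ S q - (q : ℤ√d) := by
      have : S q - (q : ℤ√d) = ∑ j ∈ Finset.range q, (z^j - 1) := by
        rw [Finset.sum_sub_distrib, Finset.sum_const, Finset.card_range]
        simp [hSdef]
      rw [this]
      refine Finset.dvd_sum fun j _ => ?_
      simpa [hδdef] using sub_dvd_pow_sub_pow z 1 j
    obtain ⟨W, hW⟩ := hdvd
    exact ⟨W, by linear_combination hW⟩
  -- doubling lemma
  have hA : ∀ k : ℕ, 1 ≤ k → ∀ q : ℕ, (z^(2*q) - 1) * 2^(k-1) ∣ z^(2^k*q) - 1 := by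
    intro k hk
    induction k, hk using Nat.le_induction with
    | base => intro q; simpa using dvd_refl (z^(2*q) - 1)
    | succ k hk ih =>
      intro q
      have heq : z^(2^(k+1)*q) - 1 = (z^(2^k*q) - 1) * (z^(2^k*q) + 1) := by
        have : 2^(k+1)*q = (2^k*q)*2 := by ring
        rw [this, pow_mul]; ring
      have h2dvd : (2 : ℤ√d) ∣ z^(2^k*q) + 1 := by
        obtain ⟨k', rfl⟩ := Nat.exists_eq_add_of_le hk
        have hdvd : z^2 - 1 ∣ z^(2^(1+k')*q) - 1 := by
          have : 2^(1+k')*q = 2*(2^k'*q) := by ring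
          rw [this, pow_mul]
          simpa using sub_dvd_pow_sub_pow (z^2) 1 (2^k'*q)
        obtain ⟨g, hg⟩ := hdvd
        refine ⟨(⟨a^2-1, a⟩ : ℤ√d) * g + 1, ?_⟩
        have : z^(2^(1+k')*q) + 1 = (z^2 - 1) * g + 2 := by linear_combination hg
        rw [this, hsq]; ring
      have step : (z^(2*q) - 1) * 2^(k-1) * 2 ∣ (z^(2^k*q) - 1) * (z^(2^k*q) + 1) :=
        mul_dvd_mul (ih q) h2dvd
      rw [heq]
      refine dvd_trans (dvd_of_eq ?_) step
      obtain ⟨k', rfl⟩ := Nat.exists_eq_add_of_le hk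
      have : (1 + k' + 1) - 1 = (1 + k' - 1) + 1 := by omega
      rw [this, pow_succ]; ring
  -- the 4-divisibility of the bracket
  obtain ⟨W1, hW1⟩ := hSsub q1
  obtain ⟨W2, hW2⟩ := hSsub q2
  obtain ⟨t, ht⟩ : ∃ t : ℕ, q1 + q2 = 2*t := by
    obtain ⟨u, hu⟩ := hq1; obtain ⟨v, hv⟩ := hq2; exact ⟨u+v+1, by omega⟩
  have hqq : ((q1 : ℤ√d) + (q2 : ℤ√d)) = 2 * (t : ℤ√d) := by
    have h := congrArg (fun n : ℕ => (n : ℤ√d)) ht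
    push_cast at h
    linear_combination h
  have hbracket : ∃ u : ℤ√d, (S q1 * δ + 2) * (S q2 * δ + 2) = 4 * u := by
    refine ⟨(b : ℤ√d) * z * S q1 * S q2 + (t : ℤ√d) * δ + 2 * (b : ℤ√d) * z * (W1 + W2) + 1, ?_⟩
    have hd2' : δ^2 = 4 * (b : ℤ√d) * z := by rw [hd2]; push_cast; ring
    linear_combination (S q1 * S q2 + 2*(W1+W2)) * hd2' + 2*δ*hW1 + 2*δ*hW2 + 2*δ*hqq
  obtain ⟨u, hu⟩ := hbracket
  -- assemble the divisibility
  obtain ⟨s1', rfl⟩ := Nat.exists_eq_add_of_le hs1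
  obtain ⟨s2', rfl⟩ := Nat.exists_eq_add_of_le hs2
  have hA1 : (z^(2*q1) - 1) * 2^s1' ∣ z^(m+1) - 1 := by
    have := hA (1+s1') (by omega) q1
    rwa [← h1, show (1+s1')-1 = s1' from by omega] at this
  have hA2 : (z^(2*q2) - 1) * 2^s2' ∣ z^(m-1) - 1 := by
    have := hA (1+s2') (by omega) q2
    rwa [← h2, show (1+s2')-1 = s2' from by omega] at this
  have hprod : ((z^(2*q1) - 1) * 2^s1') * ((z^(2*q2) - 1) * 2^s2')
      ∣ (z^(m+1) - 1) * (z^(m-1) - 1) := mul_dvd_mul hA1 hA2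
  have hz2q1 : z^(2*q1) - 1 = (S q1 * δ) * (S q1 * δ + 2) := by
    have e1 : z^q1 - 1 = S q1 * δ := (hgeom q1).symm
    have : z^(2*q1) - 1 = (z^q1 - 1) * ((z^q1 - 1) + 2) := by
      rw [two_mul, pow_add]; ring
    rw [this, e1]
  have hz2q2 : z^(2*q2) - 1 = (S q2 * δ) * (S q2 * δ + 2) := by
    have e1 : z^q2 - 1 = S q2 * δ := (hgeom q2).symm
    have : z^(2*q2) - 1 = (z^q2 - 1) * ((z^q2 - 1) + 2) := by
      rw [two_mul, pow_add]; ring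
    rw [this, e1]
  have hfactor : ((2 : ℤ√d))^((1+s1')+(1+s2')+1) * ((a : ℤ√d) - 1)
      ∣ ((z^(2*q1) - 1) * 2^s1') * ((z^(2*q2) - 1) * 2^s2') := by
    refine ⟨z * (S q1 * S q2) * u, ?_⟩
    have hd2' : δ^2 = 4 * (b : ℤ√d) * z := by rw [hd2]; push_cast; ring
    have hab' : (a : ℤ√d) - 1 = 2 * (b : ℤ√d) := by
      have h := congrArg (fun r : ℤ => (r : ℤ√d)) hab
      push_cast at h
      linear_combination h
    rw [hz2q1, hz2q2, hab']
    linear_combination (S q1 * S q2 * (S q1 * δ + 2) * (S q2 * δ + 2) * 2^s1' * 2^s2') * hd2'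
      + (4 * (b:ℤ√d) * z * S q1 * S q2 * 2^s1' * 2^s2') * hu
  -- combine: big ∣ (z^(m+1)-1)(z^(m-1)-1)
  have hbig : ((2 : ℤ√d))^((1+s1')+(1+s2')+1) * ((a : ℤ√d) - 1)
      ∣ (z^(m+1) - 1) * (z^(m-1) - 1) := hfactor.trans hprod
  -- identity with T
  obtain ⟨k, rfl⟩ : ∃ k, m = k + 3 := ⟨m - 3, by omega⟩
  set c : ℤ := 2 * ((T ℤ (k+3 : ℕ)).eval a - a) with hc
  have hLc : z^(k+3) * ((c : ℤ) : ℤ√d) = (z^(k+4) - 1) * (z^(k+2) - 1) := by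
    have hzy3 : z^(k+3) * y^(k+3) = 1 := by rw [← mul_pow, hzy, one_pow]
    have hzy1 : z^(k+3) * y = z^(k+2) := by rw [pow_succ, mul_assoc, hzy, mul_one]
    have hcc : ((c : ℤ) : ℤ√d) = z^(k+3) + y^(k+3) - z - y := by
      have hT : z^(k+3) + y^(k+3) = ((2 * (T ℤ (k+3 : ℕ)).eval a : ℤ) : ℤ√d) :=
        pow_add_pow_eq_T a (k+3)
      have hzyadd : z + y = ((2*a : ℤ) : ℤ√d) := by
        rw [Zsqrtd.ext_iff]
        constructor <;>
          simp [hzdef, hydef, Zsqrtd.re_intCast, Zsqrtd.im_intCast] <;> ring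
      rw [hc]
      calc ((2 * ((T ℤ (k+3 : ℕ)).eval a - a) : ℤ) : ℤ√d)
          = ((2 * (T ℤ (k+3 : ℕ)).eval a : ℤ) : ℤ√d) - ((2*a : ℤ) : ℤ√d) := by
            push_cast; ring
        _ = (z^(k+3) + y^(k+3)) - (z + y) := by rw [hT, hzyadd]
        _ = z^(k+3) + y^(k+3) - z - y := by ring
    rw [hcc]
    linear_combination hzy3 - hzy1
  have hm1 : k + 3 + 1 = k + 4 := rfl
  have hm2 : k + 3 - 1 = k + 2 := rfl
  rw [hm1, hm2] at hbig
  have hdvdc : ((2 : ℤ√d))^((1+s1')+(1+s2')+1) * ((a : ℤ√d) - 1) ∣ ((c : ℤ) : ℤ√d) := by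
    have h1' := hbig
    rw [← hLc] at h1'
    have h2' := Dvd.dvd.mul_left h1' (y^(k+3))
    have : y^(k+3) * (z^(k+3) * ((c : ℤ) : ℤ√d)) = ((c : ℤ) : ℤ√d) := by
      rw [← mul_assoc, ← mul_pow, mul_comm y z, hzy, one_pow, one_mul]
    rwa [this] at h2'
  -- transfer to ℤ
  have hcast : (((2:ℤ)^((1+s1')+(1+s2')+1) * (a - 1) : ℤ) : ℤ√d)
      = ((2 : ℤ√d))^((1+s1')+(1+s2')+1) * ((a : ℤ√d) - 1) := by push_cast; ring
  rw [← hcast] at hdvdc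
  have := (Zsqrtd.intCast_dvd _ _).mp hdvdc
  rcases this with ⟨hre, _⟩
  rwa [Zsqrtd.re_intCast] at hre

end ChebAux

theorem chebyshev_ball_invariant_near_one (m : ℕ) (hm : 3 ≤ m) (hodd : Odd m)
    (s : ℕ) (hs : s = max (padicValNat 2 (m + 1)) (padicValNat 2 (m - 1)))
    (n : ℕ) (hn : 2 ≤ n) (i : ℕ) (hi : i < 2 ^ s) :
    Set.MapsTo (fun x => (Polynomial.Chebyshev.T ℤ_[2] m).eval x)
      {x : ℤ_[2] | (2 ^ (n + s + 1) : ℤ_[2]) ∣ x - (1 + 2 ^ n * (1 + 2 * i))}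
      {x : ℤ_[2] | (2 ^ (n + s + 1) : ℤ_[2]) ∣ x - (1 + 2 ^ n * (1 + 2 * i))} := by
  have fact2 : Fact (Nat.Prime 2) := ⟨Nat.prime_two⟩
  set s1 := padicValNat 2 (m+1) with hs1def
  set s2 := padicValNat 2 (m-1) with hs2def
  -- decompositions
  obtain ⟨q1, h1⟩ : ∃ q1, m + 1 = 2^s1 * q1 := by
    obtain ⟨q, hq⟩ := (pow_padicValNat_dvd : (2:ℕ)^s1 ∣ m+1)
    exact ⟨q, hq⟩
  obtain ⟨q2, h2⟩ : ∃ q2, m - 1 = 2^s2 * q2 := by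
    obtain ⟨q, hq⟩ := (pow_padicValNat_dvd : (2:ℕ)^s2 ∣ m-1)
    exact ⟨q, hq⟩
  have hq1 : Odd q1 := by
    rcases Nat.even_or_odd q1 with he | ho
    · exfalso
      obtain ⟨r, hr⟩ := he
      have : (2:ℕ)^(s1+1) ∣ m+1 := ⟨r, by rw [h1, hr, pow_succ]; ring⟩
      exact pow_succ_padicValNat_not_dvd (by omega) this
    · exact ho
  have hq2 : Odd q2 := by
    rcases Nat.even_or_odd q2 with he | ho
    · exfalso
      obtain ⟨r, hr⟩ := he
      have : (2:ℕ)^(s2+1) ∣ m-1 := ⟨r, by rw [h2, hr, pow_succ]; ring⟩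
      exact pow_succ_padicValNat_not_dvd (by omega) this
    · exact ho
  obtain ⟨l, hl⟩ := hodd
  have hs1 : 1 ≤ s1 := one_le_padicValNat_of_dvd (by omega) ⟨l+1, by omega⟩
  have hs2 : 1 ≤ s2 := one_le_padicValNat_of_dvd (by omega) ⟨l, by omega⟩
  -- integer setup
  set a : ℤ := 1 + 2^n * (1 + 2*(i:ℤ)) with hadef
  have hab : a - 1 = 2 * (2^(n-1) * (1 + 2*(i:ℤ))) := by
    obtain ⟨n', rfl⟩ : ∃ n', n = n' + 1 := ⟨n-1, by omega⟩
    rw [hadef]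
    have : (n' + 1) - 1 = n' := rfl
    rw [this, pow_succ]
    ring
  have hkey := ChebAux.int_key m s1 s2 q1 q2 a (2^(n-1) * (1 + 2*(i:ℤ))) hm h1 h2 hq1 hq2 hs1 hs2 hab
  set X : ℤ := (T ℤ m).eval a - a with hX
  -- get 2^(n+s+1) ∣ X
  have hpow1 : (2:ℤ)^(n+s+2) ∣ (2:ℤ)^(s1+s2+1+n) := by
    apply pow_dvd_pow
    have : s ≤ s1 + s2 - 1 := by
      rw [hs]
      omega
    omega
  have hpow2 : (2:ℤ)^(s1+s2+1+n) ∣ (2:ℤ)^(s1+s2+1) * (a - 1) := by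
    rw [hab]
    obtain ⟨n', rfl⟩ : ∃ n', n = n' + 1 := ⟨n-1, by omega⟩
    have : (n' + 1) - 1 = n' := rfl
    rw [this]
    refine ⟨(1 + 2*(i:ℤ)), ?_⟩
    rw [pow_add]
    ring
  have hdvd2X : (2:ℤ)^(n+s+2) ∣ 2 * X := (hpow1.trans hpow2).trans hkey
  have hdvdX : (2:ℤ)^(n+s+1) ∣ X := by
    have h22 : (2:ℤ)^(n+s+2) = 2 * 2^(n+s+1) := by rw [pow_succ]; ring
    rw [h22] at hdvd2X
    exact (mul_dvd_mul_iff_left (two_ne_zero (α := ℤ))).mp hdvd2X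
  -- move to ℤ_[2]
  have hdvdXp : ((2:ℤ_[2]))^(n+s+1) ∣ ((X : ℤ) : ℤ_[2]) := by
    have := map_dvd (Int.castRingHom ℤ_[2]) hdvdX
    simpa using this
  -- final MapsTo
  intro x hx
  simp only [Set.mem_setOf_eq] at hx ⊢
  have hAa : (1 + 2 ^ n * (1 + 2 * (i:ℤ_[2])) : ℤ_[2]) = ((a : ℤ) : ℤ_[2]) := by
    rw [hadef]; push_cast; ring
  have heval : (T ℤ_[2] (m:ℤ)).eval ((a : ℤ) : ℤ_[2]) = (((T ℤ (m:ℤ)).eval a : ℤ) : ℤ_[2]) := by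
    rw [← map_T (Int.castRingHom ℤ_[2]) (m:ℤ)]
    exact eval_intCast_map (Int.castRingHom ℤ_[2]) (T ℤ (m:ℤ)) a
  have hdiff : (2 ^ (n + s + 1) : ℤ_[2]) ∣
      (T ℤ_[2] (m:ℤ)).eval x - (T ℤ_[2] (m:ℤ)).eval ((a : ℤ) : ℤ_[2]) := by
    refine dvd_trans ?_ (sub_dvd_eval_sub x ((a : ℤ) : ℤ_[2]) (T ℤ_[2] (m:ℤ)))
    rwa [← hAa]
  have : (T ℤ_[2] (m:ℤ)).eval x - (1 + 2 ^ n * (1 + 2 * (i:ℤ_[2])))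
      = ((T ℤ_[2] (m:ℤ)).eval x - (T ℤ_[2] (m:ℤ)).eval ((a : ℤ) : ℤ_[2])) + ((X : ℤ) : ℤ_[2]) := by
    rw [heval, hAa, hX]
    push_cast
    ring
  show (2 ^ (n + s + 1) : ℤ_[2]) ∣ (T ℤ_[2] (m:ℤ)).eval x - (1 + 2 ^ n * (1 + 2 * (i:ℤ_[2])))
  rw [this]
  exact dvd_add hdiff (dvd_trans (by norm_num) hdvdXp)
end
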